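/- Fix integers m, n ≥ 0 and let (γ₁, γ₂) ∈ P(m) × P(n) be a relevant pair, written γ₁ = (x₁ ≥ ⋯ ≥ x_r) and γ₂ = (y₁ ≥ ⋯ ≥ y_r) with zero parts appended to a common length r. Then the number of relevant decorated bipartitions γ ∈ RDP(m,n) with μ†(γ) = (γ₁, γ₂) equals the product over k ≥ 1 of (λ_k + 1), where λ_k is the number of indices i with x_i = y_i = k. -/

import Mathlib

/-- A decorated pair of non-negative integers: `AB j` encodes the pair `(j+1, j)`
(i.e. type `(k, k-1)` with `k = j+1`), `BA j` encodes `(j, j+1)` (type `(k-1, k)`),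
`P j` encodes `(j+1, j+1)⁺` and `M j` encodes `(j+1, j+1)⁻`. -/
inductive DPair : Type
  | AB : ℕ → DPair
  | BA : ℕ → DPair
  | P : ℕ → DPair
  | M : ℕ → DPair
deriving DecidableEq

namespace DPair

/-- The first coordinate of a decorated pair. -/
def a : DPair → ℕ
  | AB j => j + 1
  | BA j => j
  | P j => j + 1
  | M j => j + 1

/-- The second coordinate of a decorated pair. -/
def b : DPair → ℕ
  | AB j => j
  | BA j => j + 1
  | P j => j + 1
  | M j => j + 1

end DPair

/-- `γ` is a decorated bipartition of `(m, n)`: the first coordinates sum to `m`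
and the second coordinates sum to `n`. -/
def IsDP (m n : ℕ) (γ : Multiset DPair) : Prop :=
  (γ.map DPair.a).sum = m ∧ (γ.map DPair.b).sum = n

/-- `γ` is relevant: for no `k ≥ 1` do both a pair of type `(k, k-1)` and a pair of
type `(k-1, k)` occur in `γ`. -/
def IsRelevantDP (γ : Multiset DPair) : Prop :=
  ∀ j : ℕ, ¬(DPair.AB j ∈ γ ∧ DPair.BA j ∈ γ)

/-- The first component `μ₁†` of the moment map: the multiset of first coordinates,
with zero parts discarded. -/
def muA (γ : Multiset DPair) : Multiset ℕ :=
  (γ.map DPair.a).filter (0 < ·)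

/-- The second component `μ₂†` of the moment map. -/
def muB (γ : Multiset DPair) : Multiset ℕ :=
  (γ.map DPair.b).filter (0 < ·)

/-- The `i`-th entry (0-indexed) of a multiset of naturals sorted in decreasing order,
with the value `0` for indices beyond the length (i.e. zero parts appended). -/
def nthPart (s : Multiset ℕ) (i : ℕ) : ℕ :=
  ((s.sort (· ≤ ·)).reverse).getD i 0

/-- A pair of partitions (given by their multisets of parts) is relevant if, after
sorting decreasingly and appending zero parts, corresponding parts differ by at most 1. -/
def RelevantPair (p q : Multiset ℕ) : Prop :=
  ∀ i : ℕ, nthPart p i ≤ nthPart q i + 1 ∧ nthPart q i ≤ nthPart p i + 1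

/-- `λ_k`: the number of indices `i` at which both padded decreasing sequences of parts
take the value `k`. -/
noncomputable def lambdaCount (p q : Multiset ℕ) (k : ℕ) : ℕ :=
  {i : ℕ | nthPart p i = k ∧ nthPart q i = k}.ncard

/-!
Forgetting decorations turns a relevant decorated bipartition into a multiset `W` of pairs
`(k, k-1)`, `(k-1, k)`, `(k, k)` never containing both `(k, k-1)` and `(k-1, k)`. Such a `W` is
determined by its two marginals: the number of first parts `> j` minus the number of second parts
`> j` is `#(j+1, j) - #(j, j+1)`, and relevance makes one of the two zero; the multiplicity of
`(k, k)` is then read off from that of `k` in the first marginal. For a relevant pair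
`(γ₁, γ₂)` the pairs `(x_i, y_i)` form such a multiset, so it is the only one over `(γ₁, γ₂)`.
Decorating its `λ_k` pairs `(k, k)` amounts to choosing how many of them carry `⁺`, i.e. a
sub-multiset of the multiset of diagonal levels, and there are `∏ (λ_k + 1)` of those.
-/

open Multiset

theorem nthPart_antitone (s : Multiset ℕ) : Antitone (nthPart s) := by
  intro i j hij
  unfold nthPart
  have hsorted : ((s.sort (· ≤ ·)).reverse).Pairwise (· ≥ ·) :=
    List.pairwise_reverse.mpr (Multiset.pairwise_sort s (· ≤ ·))
  by_cases hj : j < ((s.sort (· ≤ ·)).reverse).length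
  · rw [List.getD_eq_getElem _ _ hj, List.getD_eq_getElem _ _ (hij.trans_lt hj)]
    rcases hij.eq_or_lt with rfl | hlt
    · rfl
    · exact List.pairwise_iff_getElem.mp hsorted i j _ hj hlt
  · rw [List.getD_eq_default _ _ (not_lt.mp hj)]
    exact Nat.zero_le _

theorem nthPart_mem {s : Multiset ℕ} {i : ℕ} (hi : i < card s) : nthPart s i ∈ s := by
  have hi' : i < ((s.sort (· ≤ ·)).reverse).length := by simpa using hi
  rw [nthPart, List.getD_eq_getElem _ _ hi', ← Multiset.mem_sort (· ≤ ·), ← List.mem_reverse]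
  exact List.getElem_mem hi'

theorem nthPart_eq_zero_of_card_le {s : Multiset ℕ} {i : ℕ} (hi : card s ≤ i) : nthPart s i = 0 :=
  List.getD_eq_default _ _ (by simpa using hi)

theorem map_nthPart_range {s : Multiset ℕ} {R : ℕ} (hR : card s ≤ R) :
    (range R).map (nthPart s) = s + replicate (R - card s) 0 := by
  set L := (s.sort (· ≤ ·)).reverse
  have hL : (L : Multiset ℕ) = s := by simp [L]
  have hlen : L.length = card s := by simp [L]
  have hpad : (List.range R).map (fun i => L.getD i 0) = L ++ List.replicate (R - L.length) 0 := by
    refine List.ext_getElem ?_ fun i _ _ => ?_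
    · simp only [List.length_map, List.length_range, List.length_append, List.length_replicate]
      omega
    · rcases lt_or_ge i L.length with hi | hi
      · simp [List.getElem_append_left hi, hi]
      · simp [List.getElem_append_right hi, hi]
  calc (range R).map (nthPart s) = ((List.range R).map fun i => L.getD i 0 : List ℕ) := rfl
    _ = s + replicate (R - card s) 0 := by
      rw [hpad, ← Multiset.coe_add, Multiset.coe_replicate, hL, hlen]

section BipartitionPairs

def fstParts (W : Multiset (ℕ × ℕ)) : Multiset ℕ := (W.map Prod.fst).filter (0 < ·)

def sndParts (W : Multiset (ℕ × ℕ)) : Multiset ℕ := (W.map Prod.snd).filter (0 < ·)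

def IsAdjacent (z : ℕ × ℕ) : Prop := z.1 ≤ z.2 + 1 ∧ z.2 ≤ z.1 + 1

structure IsRelevantBipartition (W : Multiset (ℕ × ℕ)) : Prop where
  adjacent : ∀ z ∈ W, IsAdjacent z
  zero_not_mem : (0, 0) ∉ W
  not_both : ∀ j, ¬((j + 1, j) ∈ W ∧ (j, j + 1) ∈ W)

variable {W W' : Multiset (ℕ × ℕ)}

theorem countP_fstParts {P : ℕ → Prop} [DecidablePred P] (hP : ∀ x, P x → 0 < x) :
    (fstParts W).countP P = W.countP (fun z => P z.1) := by
  rw [fstParts, countP_filter, countP_map, ← countP_eq_card_filter]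
  exact countP_congr rfl fun z _ => propext (and_iff_left_of_imp (hP z.1))

theorem countP_sndParts {P : ℕ → Prop} [DecidablePred P] (hP : ∀ x, P x → 0 < x) :
    (sndParts W).countP P = W.countP (fun z => P z.2) := by
  rw [sndParts, countP_filter, countP_map, ← countP_eq_card_filter]
  exact countP_congr rfl fun z _ => propext (and_iff_left_of_imp (hP z.2))

-- An adjacent pair has exactly one coordinate `> j` only if it is `(j + 1, j)` or `(j, j + 1)`.
theorem countP_fst_lt_add_count (hW : ∀ z ∈ W, IsAdjacent z) (j : ℕ) :
    W.countP (fun z => j < z.1) + W.count (j, j + 1) =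
      W.countP (fun z => j < z.2) + W.count (j + 1, j) := by
  induction W using Multiset.induction_on with
  | empty => simp
  | cons z W ih =>
    have hz := hW z (mem_cons_self z W)
    have ih := ih fun y hy => hW y (mem_cons_of_mem hy)
    obtain ⟨k, l⟩ := z
    simp only [IsAdjacent] at hz
    simp only [countP_cons, count_cons, Prod.mk.injEq]
    split_ifs <;> omega

theorem countP_fst_eq_succ (hW : ∀ z ∈ W, IsAdjacent z) (j : ℕ) :
    W.countP (fun z => j + 1 = z.1) =
      W.count (j + 1, j) + W.count (j + 1, j + 1) + W.count (j + 1, j + 2) := by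
  induction W using Multiset.induction_on with
  | empty => simp
  | cons z W ih =>
    have hz := hW z (mem_cons_self z W)
    have ih := ih fun y hy => hW y (mem_cons_of_mem hy)
    obtain ⟨k, l⟩ := z
    simp only [IsAdjacent] at hz
    simp only [countP_cons, count_cons, Prod.mk.injEq]
    split_ifs <;> omega

theorem IsRelevantBipartition.count_eq_zero_or (hW : IsRelevantBipartition W) (j : ℕ) :
    W.count (j + 1, j) = 0 ∨ W.count (j, j + 1) = 0 :=
  (not_and_or.mp (hW.not_both j)).imp count_eq_zero.mpr count_eq_zero.mpr

theorem IsRelevantBipartition.eq_of_parts_eq (hW : IsRelevantBipartition W)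
    (hW' : IsRelevantBipartition W') (hfst : fstParts W = fstParts W')
    (hsnd : sndParts W = sndParts W') : W = W' := by
  have hoff : ∀ j, W.count (j + 1, j) = W'.count (j + 1, j) ∧
      W.count (j, j + 1) = W'.count (j, j + 1) := by
    intro j
    have hpos : ∀ x, j < x → 0 < x := fun x hx => by omega
    have e := countP_fst_lt_add_count hW.adjacent j
    have e' := countP_fst_lt_add_count hW'.adjacent j
    rw [← countP_fstParts hpos, ← countP_sndParts hpos, hfst, hsnd] at e
    rw [← countP_fstParts hpos, ← countP_sndParts hpos] at e'
    rcases hW.count_eq_zero_or j with h | h <;> rcases hW'.count_eq_zero_or j with h' | h' <;>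
      omega
  have hdiag : ∀ j, W.count (j + 1, j + 1) = W'.count (j + 1, j + 1) := by
    intro j
    have e := countP_fst_eq_succ hW.adjacent j
    have e' := countP_fst_eq_succ hW'.adjacent j
    have hpos : ∀ x, j + 1 = x → 0 < x := fun x hx => by omega
    rw [← countP_fstParts hpos, hfst, countP_fstParts hpos] at e
    have := hoff j
    obtain ⟨-, h⟩ : _ ∧ W.count (j + 1, j + 2) = W'.count (j + 1, j + 2) := hoff (j + 1)
    omega
  ext ⟨k, l⟩
  by_cases hmem : (k, l) ∈ W ∨ (k, l) ∈ W'
  · obtain ⟨⟨hkl, hlk⟩, hne⟩ : IsAdjacent (k, l) ∧ (k, l) ≠ (0, 0) := by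
      rcases hmem with h | h
      · exact ⟨hW.adjacent _ h, ne_of_mem_of_not_mem h hW.zero_not_mem⟩
      · exact ⟨hW'.adjacent _ h, ne_of_mem_of_not_mem h hW'.zero_not_mem⟩
    rcases Nat.lt_trichotomy k l with h | rfl | h
    · obtain rfl : l = k + 1 := by omega
      exact (hoff k).2
    · obtain ⟨j, rfl⟩ : ∃ j, k = j + 1 := ⟨k - 1, by grind⟩
      exact hdiag j
    · obtain rfl : k = l + 1 := by omega
      exact (hoff l).1
  · obtain ⟨h, h'⟩ := not_or.mp hmem
    rw [count_eq_zero.mpr h, count_eq_zero.mpr h']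

end BipartitionPairs

section ZipParts
variable {p q : Multiset ℕ}

/-- The pairs `(x_i, y_i)` of the two padded decreasing sequences; stopping at the longer
length keeps `(0, 0)` out. -/
def zipParts (p q : Multiset ℕ) : Multiset (ℕ × ℕ) :=
  (range (max (card p) (card q))).map fun i => (nthPart p i, nthPart q i)

theorem filter_pos_add_replicate_zero (hp : 0 ∉ p) (r : ℕ) :
    (p + replicate r 0).filter (0 < ·) = p := by
  rw [filter_add, filter_eq_self.mpr, filter_eq_nil.mpr, add_zero]
  · intro x hx
    simp [eq_of_mem_replicate hx]
  · exact fun x hx => Nat.pos_of_ne_zero (ne_of_mem_of_not_mem hx hp)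

theorem fstParts_zipParts (hp : 0 ∉ p) : fstParts (zipParts p q) = p := by
  rw [fstParts, zipParts, map_map]
  exact (congrArg _ (map_nthPart_range (le_max_left _ _))).trans
    (filter_pos_add_replicate_zero hp _)

theorem sndParts_zipParts (hq : 0 ∉ q) : sndParts (zipParts p q) = q := by
  rw [sndParts, zipParts, map_map]
  exact (congrArg _ (map_nthPart_range (le_max_right _ _))).trans
    (filter_pos_add_replicate_zero hq _)

theorem isRelevantBipartition_zipParts (hp : 0 ∉ p) (hq : 0 ∉ q) (hrel : RelevantPair p q) :
    IsRelevantBipartition (zipParts p q) where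
  adjacent := by
    simp only [zipParts, mem_map, mem_range]
    rintro _ ⟨i, -, rfl⟩
    exact hrel i
  zero_not_mem := by
    simp only [zipParts, mem_map, mem_range, Prod.mk.injEq, not_exists, not_and]
    intro i hi hpi hqi
    rcases lt_max_iff.mp hi with hi | hi
    · exact hp (hpi ▸ nthPart_mem hi)
    · exact hq (hqi ▸ nthPart_mem hi)
  not_both := by
    simp only [zipParts, mem_map, mem_range, Prod.mk.injEq]
    rintro j ⟨⟨i, -, hpi, hqi⟩, ⟨i', -, hpi', hqi'⟩⟩
    rcases le_total i i' with h | h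
    · have := nthPart_antitone q h
      omega
    · have := nthPart_antitone p h
      omega

theorem count_zipParts_self {k : ℕ} (hk : k ≠ 0) :
    (zipParts p q).count (k, k) = lambdaCount p q k := by
  rw [zipParts, count_map, lambdaCount]
  change ((Finset.range _).filter fun i => (k, k) = (nthPart p i, nthPart q i)).card = _
  rw [← Set.ncard_coe_finset]
  congr 1
  ext i
  simp only [Finset.coe_filter, Finset.mem_range, Prod.mk.injEq, Set.mem_ofPred_eq]
  refine ⟨fun h => ⟨h.2.1.symm, h.2.2.symm⟩, fun ⟨hpi, hqi⟩ => ⟨?_, hpi.symm, hqi.symm⟩⟩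
  by_contra hi
  exact hk (hpi ▸ nthPart_eq_zero_of_card_le (le_of_max_le_left (not_lt.mp hi)))

end ZipParts

namespace DPair

def toPair (d : DPair) : ℕ × ℕ := (d.a, d.b)

def isPlus : DPair → Bool
  | P _ => true
  | _ => false

def ofOffDiag (z : ℕ × ℕ) : DPair := if z.1 = z.2 + 1 then AB z.2 else BA z.1

theorem isAdjacent_toPair (d : DPair) : IsAdjacent d.toPair := by
  cases d <;> simp only [IsAdjacent, toPair, a, b] <;> omega

theorem toPair_ne_zero (d : DPair) : d.toPair ≠ (0, 0) := by
  cases d <;> simp [toPair, a, b]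

theorem toPair_eq_succ_self_iff {d : DPair} {j : ℕ} : d.toPair = (j + 1, j) ↔ d = AB j := by
  cases d <;> simp only [toPair, a, b, Prod.mk.injEq, AB.injEq, reduceCtorEq, iff_false] <;> omega

theorem toPair_eq_self_succ_iff {d : DPair} {j : ℕ} : d.toPair = (j, j + 1) ↔ d = BA j := by
  cases d <;> simp only [toPair, a, b, Prod.mk.injEq, BA.injEq, reduceCtorEq, iff_false] <;> omega

theorem toPair_ofOffDiag {z : ℕ × ℕ} (hz : IsAdjacent z) (hne : z.1 ≠ z.2) :
    (ofOffDiag z).toPair = z := by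
  obtain ⟨k, l⟩ := z
  obtain ⟨hkl, hlk⟩ := hz
  dsimp only at hkl hlk hne
  unfold ofOffDiag
  dsimp only
  split_ifs <;> simp only [toPair, a, b, Prod.mk.injEq, and_true, true_and] <;> omega

end DPair

open DPair

def diagLevels (W : Multiset (ℕ × ℕ)) : Multiset ℕ := (W.filter fun z => z.1 = z.2).map Prod.fst

def plusLevels (γ : Multiset DPair) : Multiset ℕ := (γ.filter (·.isPlus)).map DPair.a

/-- The elements of `s ≤ diagLevels W` are nonzero levels, so `k - 1` does not truncate. -/
def decorate (W : Multiset (ℕ × ℕ)) (s : Multiset ℕ) : Multiset DPair :=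
  (W.filter fun z => z.1 ≠ z.2).map ofOffDiag + s.map (fun k => P (k - 1)) +
    (diagLevels W - s).map (fun k => M (k - 1))

section Decorations
variable {W : Multiset (ℕ × ℕ)} {γ : Multiset DPair} {s : Multiset ℕ}

theorem count_diagLevels (W : Multiset (ℕ × ℕ)) (k : ℕ) :
    (diagLevels W).count k = W.count (k, k) := by
  rw [diagLevels, count_map, filter_filter, count_eq_card_filter_eq]
  congr 1
  apply filter_congr
  rintro ⟨x, y⟩ -
  simp only [Prod.mk.injEq]
  grind

theorem count_map_toPair_succ_self (γ : Multiset DPair) (j : ℕ) :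
    (γ.map toPair).count (j + 1, j) = γ.count (AB j) := by
  rw [count_map, count_eq_card_filter_eq]
  congr 1
  exact filter_congr fun d _ => by rw [eq_comm, toPair_eq_succ_self_iff, eq_comm]

theorem count_map_toPair_self_succ (γ : Multiset DPair) (j : ℕ) :
    (γ.map toPair).count (j, j + 1) = γ.count (BA j) := by
  rw [count_map, count_eq_card_filter_eq]
  congr 1
  exact filter_congr fun d _ => by rw [eq_comm, toPair_eq_self_succ_iff, eq_comm]

theorem count_map_toPair_self (γ : Multiset DPair) (j : ℕ) :
    (γ.map toPair).count (j + 1, j + 1) = γ.count (P j) + γ.count (M j) := by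
  induction γ using Multiset.induction_on with
  | empty => simp
  | cons d γ ih =>
    cases d <;>
      simp only [map_cons, count_cons, ih, toPair, a, b, Prod.mk.injEq, P.injEq, M.injEq,
        reduceCtorEq, Nat.add_right_cancel_iff, and_self, if_false, add_zero] <;>
      split_ifs <;> omega

theorem count_plusLevels (γ : Multiset DPair) (j : ℕ) :
    (plusLevels γ).count (j + 1) = γ.count (P j) := by
  rw [plusLevels, count_map, filter_filter, count_eq_card_filter_eq]
  congr 1
  apply filter_congr
  intro d _
  cases d <;> simp [isPlus, a, eq_comm]

theorem plusLevels_le_diagLevels (γ : Multiset DPair) :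
    plusLevels γ ≤ diagLevels (γ.map toPair) := by
  rw [diagLevels, filter_map, map_map, plusLevels]
  refine map_le_map (monotone_filter_right γ fun d hd => ?_)
  cases d <;> simp_all [isPlus, toPair, a, b]

theorem eq_of_map_toPair_eq_of_plusLevels_eq {γ' : Multiset DPair}
    (hW : γ.map toPair = γ'.map toPair) (hs : plusLevels γ = plusLevels γ') : γ = γ' := by
  ext d
  cases d with
  | AB j => rw [← count_map_toPair_succ_self, hW, count_map_toPair_succ_self]
  | BA j => rw [← count_map_toPair_self_succ, hW, count_map_toPair_self_succ]
  | P j => rw [← count_plusLevels, hs, count_plusLevels]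
  | M j =>
    have h := count_map_toPair_self γ j
    rw [hW, count_map_toPair_self, ← count_plusLevels γ', ← hs, count_plusLevels] at h
    omega

theorem zero_not_mem_diagLevels (h0 : (0, 0) ∉ W) : 0 ∉ diagLevels W := by
  rw [← count_eq_zero, count_diagLevels, count_eq_zero]
  exact h0

theorem map_toPair_decorate (hadj : ∀ z ∈ W, IsAdjacent z) (h0 : (0, 0) ∉ W)
    (hs : s ≤ diagLevels W) : (decorate W s).map toPair = W := by
  have hpos : ∀ t ≤ diagLevels W, ∀ k ∈ t, k - 1 + 1 = k := fun t ht k hk =>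
    Nat.succ_pred_eq_of_ne_zero
      (ne_of_mem_of_not_mem (mem_of_le ht hk) (zero_not_mem_diagLevels h0))
  have hoff : (W.filter fun z => z.1 ≠ z.2).map (fun z => (ofOffDiag z).toPair) =
      W.filter fun z => z.1 ≠ z.2 :=
    (map_congr rfl fun z hz =>
      toPair_ofOffDiag (hadj z (mem_of_mem_filter hz)) (mem_filter.mp hz).2).trans (map_id _)
  have hP : s.map (fun k => (P (k - 1)).toPair) = s.map fun k => (k, k) :=
    map_congr rfl fun k hk => by simp [toPair, a, b, hpos s hs k hk]
  have hM : (diagLevels W - s).map (fun k => (M (k - 1)).toPair) =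
      (diagLevels W - s).map fun k => (k, k) :=
    map_congr rfl fun k hk => by simp [toPair, a, b, hpos _ tsub_le_self k hk]
  have hdiag : (diagLevels W).map (fun k => (k, k)) = W.filter fun z => z.1 = z.2 := by
    rw [diagLevels, map_map]
    exact (map_congr rfl fun z hz => (Prod.ext rfl (mem_filter.mp hz).2 : (z.1, z.1) = id z)).trans
      (map_id _)
  rw [decorate, Multiset.map_add, Multiset.map_add, map_map, map_map, map_map]
  simp only [Function.comp_def]
  rw [hoff, hP, hM, add_assoc, ← Multiset.map_add, add_tsub_cancel_of_le hs, hdiag, add_comm,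
    filter_add_not]

theorem plusLevels_decorate (h0 : (0, 0) ∉ W) (hs : s ≤ diagLevels W) :
    plusLevels (decorate W s) = s := by
  have hoff : ∀ d ∈ (W.filter fun z => z.1 ≠ z.2).map ofOffDiag, ¬d.isPlus := by
    simp only [mem_map]
    rintro _ ⟨z, -, rfl⟩
    unfold ofOffDiag
    split_ifs <;> simp [isPlus]
  have hM : ∀ d ∈ (diagLevels W - s).map (fun k => M (k - 1)), ¬d.isPlus := by
    simp only [mem_map]
    rintro _ ⟨k, -, rfl⟩
    simp [isPlus]
  have hP : ∀ d ∈ s.map (fun k => P (k - 1)), d.isPlus := by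
    simp only [mem_map]
    rintro _ ⟨k, -, rfl⟩
    rfl
  rw [plusLevels, decorate, filter_add, filter_add, filter_eq_nil.mpr hoff, filter_eq_nil.mpr hM,
    filter_eq_self.mpr hP, zero_add, add_zero, map_map]
  exact (map_congr rfl fun k hk => Nat.succ_pred_eq_of_ne_zero
    (ne_of_mem_of_not_mem (mem_of_le hs hk) (zero_not_mem_diagLevels h0))).trans (map_id _)

theorem ncard_map_toPair_eq (hadj : ∀ z ∈ W, IsAdjacent z) (h0 : (0, 0) ∉ W) :
    {γ : Multiset DPair | γ.map toPair = W}.ncard =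
      ∏ k ∈ (diagLevels W).toFinset, ((diagLevels W).count k + 1) := by
  rw [← Multiset.card_Iic, ← Set.ncard_coe_finset]
  apply Set.ncard_congr (fun γ _ => plusLevels γ)
  · rintro γ rfl
    simpa using plusLevels_le_diagLevels γ
  · rintro γ γ' hγ hγ' h
    exact eq_of_map_toPair_eq_of_plusLevels_eq (hγ.trans hγ'.symm) h
  · intro s hs
    rw [Finset.mem_coe, Finset.mem_Iic] at hs
    exact ⟨decorate W s, map_toPair_decorate hadj h0 hs, plusLevels_decorate h0 hs⟩

end Decorations

theorem sum_filter_pos (s : Multiset ℕ) : (s.filter (0 < ·)).sum = s.sum := by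
  conv_rhs => rw [← filter_add_not (0 < ·) s]
  rw [sum_add, sum_eq_zero fun x hx => Nat.eq_zero_of_not_pos (mem_filter.mp hx).2, add_zero]

theorem muA_eq_fstParts (γ : Multiset DPair) : muA γ = fstParts (γ.map toPair) := by
  rw [fstParts, map_map]
  rfl

theorem muB_eq_sndParts (γ : Multiset DPair) : muB γ = sndParts (γ.map toPair) := by
  rw [sndParts, map_map]
  rfl

theorem isRelevantBipartition_map_toPair_iff {γ : Multiset DPair} :
    IsRelevantBipartition (γ.map toPair) ↔ IsRelevantDP γ := by
  constructor
  · rintro h j ⟨hAB, hBA⟩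
    exact h.not_both j ⟨mem_map_of_mem toPair hAB, mem_map_of_mem toPair hBA⟩
  · intro h
    refine ⟨?_, ?_, ?_⟩
    · simp only [mem_map]
      rintro _ ⟨d, -, rfl⟩
      exact isAdjacent_toPair d
    · simp only [mem_map, not_exists, not_and]
      exact fun d _ => toPair_ne_zero d
    · simp only [mem_map, toPair_eq_succ_self_iff, toPair_eq_self_succ_iff, exists_eq_right]
      exact h

theorem fiber_iff_map_toPair_eq_zipParts {m n : ℕ} {p q : Multiset ℕ} (hp : 0 ∉ p) (hq : 0 ∉ q)
    (hm : p.sum = m) (hn : q.sum = n) (hrel : RelevantPair p q) (γ : Multiset DPair) :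
    IsDP m n γ ∧ IsRelevantDP γ ∧ muA γ = p ∧ muB γ = q ↔ γ.map toPair = zipParts p q := by
  have hZ := isRelevantBipartition_zipParts hp hq hrel
  constructor
  · rintro ⟨-, hγ, hA, hB⟩
    refine (isRelevantBipartition_map_toPair_iff.mpr hγ).eq_of_parts_eq hZ ?_ ?_
    · rw [← muA_eq_fstParts, hA, fstParts_zipParts hp]
    · rw [← muB_eq_sndParts, hB, sndParts_zipParts hq]
  · intro hγ
    have hA : muA γ = p := by rw [muA_eq_fstParts, hγ, fstParts_zipParts hp]
    have hB : muB γ = q := by rw [muB_eq_sndParts, hγ, sndParts_zipParts hq]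
    refine ⟨⟨?_, ?_⟩, isRelevantBipartition_map_toPair_iff.mp (hγ ▸ hZ), hA, hB⟩
    · rw [← hm, ← hA, muA, sum_filter_pos]
    · rw [← hn, ← hB, muB, sum_filter_pos]

theorem finprod_count_add_one {s : Multiset ℕ} (hs : 0 ∉ s) :
    ∏ᶠ k : {k : ℕ // 1 ≤ k}, (s.count (k : ℕ) + 1) = ∏ k ∈ s.toFinset, (s.count k + 1) := by
  rw [finprod_subtype_eq_finprod_cond (f := fun k => s.count k + 1)]
  refine finprod_cond_eq_prod_of_cond_iff _ fun {k} hk => ?_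
  have hk : k ∈ s := count_pos.mp (Nat.pos_of_ne_zero fun h => hk (by simp [h]))
  simp only [mem_toFinset, hk, iff_true]
  exact Nat.one_le_iff_ne_zero.mpr (ne_of_mem_of_not_mem hk hs)

/-- For a relevant pair `(γ₁, γ₂) ∈ P(m) × P(n)`, the number of relevant decorated
bipartitions `γ ∈ RDP(m,n)` with `μ†(γ) = (γ₁, γ₂)` equals `∏_{k ≥ 1} (λ_k + 1)`. -/
theorem ncard_fiber_eq_prod {m n : ℕ} (γ₁ : Nat.Partition m) (γ₂ : Nat.Partition n)
    (hrel : RelevantPair γ₁.parts γ₂.parts) :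
    {γ : Multiset DPair | IsDP m n γ ∧ IsRelevantDP γ ∧
        muA γ = γ₁.parts ∧ muB γ = γ₂.parts}.ncard =
      ∏ᶠ k : {k : ℕ // 1 ≤ k}, (lambdaCount γ₁.parts γ₂.parts (k : ℕ) + 1) := by
  have hp : 0 ∉ γ₁.parts := fun h => lt_irrefl 0 (γ₁.parts_pos h)
  have hq : 0 ∉ γ₂.parts := fun h => lt_irrefl 0 (γ₂.parts_pos h)
  have hZ := isRelevantBipartition_zipParts hp hq hrel
  have hfiber := fun γ => fiber_iff_map_toPair_eq_zipParts hp hq γ₁.parts_sum γ₂.parts_sum hrel γ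
  simp only [hfiber]
  rw [ncard_map_toPair_eq hZ.adjacent hZ.zero_not_mem,
    ← finprod_count_add_one (zero_not_mem_diagLevels hZ.zero_not_mem)]
  refine finprod_congr fun k => ?_
  rw [count_diagLevels, count_zipParts_self (Nat.one_le_iff_ne_zero.mp k.2)]
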